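/- arXiv:2312.15432 — 9 statements merged into one kernel-verified Lean document; each statement's English description precedes it below -/
import Mathlib

section
/- Let n ≥ 1, let Q be an n×n real matrix with nonnegative entries, q ∈ ℝ^n its diagonal vector, Q* the matrix Q with diagonal zeroed, C > 0, and let φ = 2/(1+√5). If x ∈ [0,1]^n satisfies xᵀQx ≤ C and q·x ≤ C, then the scaled vector φ·x satisfies (φx)ᵀQ*(φx) + q·(φx) ≤ C; that is, φ·x is F2-feasible. -/
/-- Scaling an F1-feasible fractional point by the reverse golden ratio gives an
F2-feasible point. -/
theorem stmt_1 (n : ℕ) (hn : 1 ≤ n) (Q : Matrix (Fin n) (Fin n) ℝ)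
    (hQ : ∀ i j, 0 ≤ Q i j) (q : Fin n → ℝ) (hq : ∀ i, q i = Q i i)
    (Qstar : Matrix (Fin n) (Fin n) ℝ)
    (hQstar : ∀ i j, Qstar i j = if i = j then 0 else Q i j)
    (C : ℝ) (hC : 0 < C) (φ : ℝ) (hφ : φ = 2 / (1 + Real.sqrt 5))
    (x : Fin n → ℝ) (hx : ∀ i, 0 ≤ x i ∧ x i ≤ 1)
    (h1 : ∑ i, ∑ j, x i * Q i j * x j ≤ C) (h2 : ∑ i, q i * x i ≤ C) :
    ∑ i, ∑ j, (φ * x i) * Qstar i j * (φ * x j) + ∑ i, q i * (φ * x i) ≤ C := by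
  have hs5 : Real.sqrt 5 ^ 2 = 5 := Real.sq_sqrt (by norm_num)
  have hs5pos : (0:ℝ) < Real.sqrt 5 := Real.sqrt_pos.mpr (by norm_num)
  have hφpos : 0 < φ := by
    rw [hφ]; positivity
  have hgold : φ ^ 2 + φ = 1 := by
    rw [hφ]
    have h1s : (1 + Real.sqrt 5) ≠ 0 := by positivity
    field_simp
    nlinarith [hs5]
  -- rewrite inner sums
  have hinner : ∀ i, ∑ j, x i * Qstar i j * x j
      = (∑ j, x i * Q i j * x j) - q i * x i * x i := by
    intro i
    have : ∀ j, x i * Qstar i j * x j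
        = x i * Q i j * x j - (if i = j then q i * x i * x i else 0) := by
      intro j
      rw [hQstar]
      by_cases h : i = j
      · subst h; simp [hq i]; ring
      · simp [h]
    rw [Finset.sum_congr rfl (fun j _ => this j), Finset.sum_sub_distrib,
      Finset.sum_ite_eq Finset.univ i (fun _ => q i * x i * x i)]
    simp
  have hscale : ∑ i, ∑ j, (φ * x i) * Qstar i j * (φ * x j)
      = φ ^ 2 * ((∑ i, ∑ j, x i * Q i j * x j) - ∑ i, q i * x i * x i) := by
    have step : ∀ i ∈ Finset.univ, ∑ j, (φ * x i) * Qstar i j * (φ * x j)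
        = φ ^ 2 * ((∑ j, x i * Q i j * x j) - q i * x i * x i) := by
      intro i _
      rw [← hinner i, Finset.mul_sum]
      exact Finset.sum_congr rfl (fun j _ => by ring)
    rw [Finset.sum_congr rfl step, ← Finset.mul_sum, Finset.sum_sub_distrib]
  have hS3 : ∑ i, q i * (φ * x i) = φ * ∑ i, q i * x i := by
    rw [Finset.mul_sum]
    exact Finset.sum_congr rfl (fun i _ => by ring)
  have hS2nn : 0 ≤ ∑ i, q i * x i * x i := by
    refine Finset.sum_nonneg (fun i _ => ?_)
    have := (hx i).1
    have := hq i ▸ hQ i i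
    positivity
  rw [hscale, hS3]
  nlinarith [hgold, hφpos, hS2nn, h1, h2, sq_nonneg φ]
end

section
/- Assume additionally a_j' > 0 and φ'_i > 0. Then there exists β ∈ [−x_j, 1−x_j] such that φ(0, x_j+β) ≥ φ(x_i, x_j) and ψ(0, x_j+β) ≤ ψ(x_i, x_j) if and only if both φ(x_i,x_j) ≤ a_j' and φ'_i·q_j' ≤ a_j'·ψ'_i hold. -/
/-- Case 1 of the pipage rounding (α = -x_i): feasibility of the rounding is
equivalent to system (I1). -/
theorem stmt_5 (a_ij a_i' a_j' q_ij q_i' q_j' x_i x_j : ℝ)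
    (haij : a_ij ≤ 0) (hqij : 0 ≤ q_ij) (hqi : 0 ≤ q_i') (hqj : 0 ≤ q_j')
    (hxi0 : 0 < x_i) (hxi1 : x_i < 1) (hxj0 : 0 < x_j) (hxj1 : x_j < 1)
    (haj : 0 < a_j') (hphii : 0 < a_ij * x_j + a_i') :
    (∃ β : ℝ, β ∈ Set.Icc (-x_j) (1 - x_j) ∧
      a_ij * 0 * (x_j + β) + a_i' * 0 + a_j' * (x_j + β) ≥
        a_ij * x_i * x_j + a_i' * x_i + a_j' * x_j ∧
      q_ij * 0 * (x_j + β) + q_i' * 0 + q_j' * (x_j + β) ≤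
        q_ij * x_i * x_j + q_i' * x_i + q_j' * x_j) ↔
    (a_ij * x_i * x_j + a_i' * x_i + a_j' * x_j ≤ a_j' ∧
      (a_ij * x_j + a_i') * q_j' ≤ a_j' * (q_ij * x_j + q_i')) := by
  constructor
  · rintro ⟨β, ⟨hb1, hb2⟩, h1, h2⟩
    constructor
    · nlinarith
    · have key : q_j' * (a_ij * x_i * x_j + a_i' * x_i + a_j' * x_j) ≤
          a_j' * (q_ij * x_i * x_j + q_i' * x_i + q_j' * x_j) := by
        nlinarith [mul_le_mul_of_nonneg_left h1 hqj, mul_le_mul_of_nonneg_left h2 haj.le]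
      nlinarith [key, hxi0]
  · rintro ⟨h1, h2⟩
    have hA : 0 < a_ij * x_i * x_j + a_i' * x_i + a_j' * x_j := by nlinarith
    refine ⟨(a_ij * x_i * x_j + a_i' * x_i + a_j' * x_j) / a_j' - x_j, ⟨?_, ?_⟩, ?_, ?_⟩
    · have : 0 < (a_ij * x_i * x_j + a_i' * x_i + a_j' * x_j) / a_j' := div_pos hA haj
      linarith
    · have : (a_ij * x_i * x_j + a_i' * x_i + a_j' * x_j) / a_j' ≤ 1 :=
        (div_le_one haj).mpr h1
      linarith
    · have := mul_div_cancel₀ (a_ij * x_i * x_j + a_i' * x_i + a_j' * x_j) haj.ne'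
      nlinarith [mul_div_cancel₀ (a_ij * x_i * x_j + a_i' * x_i + a_j' * x_j) haj.ne']
    · have h3 : q_j' * (a_ij * x_i * x_j + a_i' * x_i + a_j' * x_j) / a_j' ≤
          q_ij * x_i * x_j + q_i' * x_i + q_j' * x_j := by
        rw [div_le_iff₀ haj]; nlinarith
      calc q_ij * 0 * (x_j + ((a_ij * x_i * x_j + a_i' * x_i + a_j' * x_j) / a_j' - x_j)) +
          q_i' * 0 + q_j' * (x_j + ((a_ij * x_i * x_j + a_i' * x_i + a_j' * x_j) / a_j' - x_j)) =
          q_j' * (a_ij * x_i * x_j + a_i' * x_i + a_j' * x_j) / a_j' := by ring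
        _ ≤ _ := h3
end

section
/- Assume additionally a_i' > 0 and φ'_j > 0. Then there exists α ∈ [−x_i, 1−x_i] such that φ(x_i+α, 0) ≥ φ(x_i, x_j) and ψ(x_i+α, 0) ≤ ψ(x_i, x_j) if and only if both φ(x_i,x_j) ≤ a_i' and φ'_j·q_i' ≤ a_i'·ψ'_j hold. -/
/-- Case 2 of the pipage rounding (β = -x_j): feasibility of the rounding is
equivalent to system (I2). -/
theorem stmt_6 (a_ij a_i' a_j' q_ij q_i' q_j' x_i x_j : ℝ)
    (haij : a_ij ≤ 0) (hqij : 0 ≤ q_ij) (hqi : 0 ≤ q_i') (hqj : 0 ≤ q_j')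
    (hxi0 : 0 < x_i) (hxi1 : x_i < 1) (hxj0 : 0 < x_j) (hxj1 : x_j < 1)
    (hai : 0 < a_i') (hphij : 0 < a_ij * x_i + a_j') :
    (∃ α : ℝ, α ∈ Set.Icc (-x_i) (1 - x_i) ∧
      a_ij * (x_i + α) * 0 + a_i' * (x_i + α) + a_j' * 0 ≥
        a_ij * x_i * x_j + a_i' * x_i + a_j' * x_j ∧
      q_ij * (x_i + α) * 0 + q_i' * (x_i + α) + q_j' * 0 ≤
        q_ij * x_i * x_j + q_i' * x_i + q_j' * x_j) ↔
    (a_ij * x_i * x_j + a_i' * x_i + a_j' * x_j ≤ a_i' ∧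
      (a_ij * x_i + a_j') * q_i' ≤ a_i' * (q_ij * x_i + q_j')) := by
  set A := a_ij * x_i * x_j + a_i' * x_i + a_j' * x_j with hA
  set B := q_ij * x_i * x_j + q_i' * x_i + q_j' * x_j with hB
  constructor
  · rintro ⟨α, ⟨hα0, hα1⟩, h1, h2⟩
    simp only [mul_zero, zero_mul, add_zero] at h1 h2
    constructor
    · calc A ≤ a_i' * (x_i + α) := by linarith [h1]
        _ ≤ a_i' * 1 := by nlinarith
        _ = a_i' := by ring
    · -- q_i' * A ≤ q_i' * a_i' * (x_i+α) ≤ a_i' * B, then divide by x_j > 0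
      have key : q_i' * A ≤ a_i' * B := by nlinarith
      have : x_j * ((a_ij * x_i + a_j') * q_i') ≤ x_j * (a_i' * (q_ij * x_i + q_j')) := by
        nlinarith
      exact le_of_mul_le_mul_left this hxj0
  · rintro ⟨h1, h2⟩
    refine ⟨A / a_i' - x_i, ⟨?_, ?_⟩, ?_, ?_⟩
    · have : 0 < A := by nlinarith
      have : 0 ≤ A / a_i' := le_of_lt (div_pos this hai)
      linarith
    · have : A / a_i' ≤ 1 := (div_le_one hai).mpr h1
      linarith
    · simp only [mul_zero, zero_mul, add_zero]
      have : x_i + (A / a_i' - x_i) = A / a_i' := by ring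
      rw [this, mul_div_cancel₀ _ (ne_of_gt hai)]
      linarith
    · simp only [mul_zero, zero_mul, add_zero]
      have heq : x_i + (A / a_i' - x_i) = A / a_i' := by ring
      rw [heq]
      rw [zero_add, mul_div_assoc', div_le_iff₀ hai]
      nlinarith
end

section
/- Assume additionally φ'_i > 0 and q_ij + q_j' > 0. Then there exists β ∈ [−x_j, 1−x_j] such that φ(1, x_j+β) ≥ φ(x_i, x_j) and ψ(1, x_j+β) ≤ ψ(x_i, x_j) if and only if both ψ(x_i,x_j) ≥ q_i' and φ'_i·(q_j' + q_ij) ≥ ψ'_i·(a_j' + a_ij) hold. -/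
set_option maxHeartbeats 1000000 in
/-- Case 3 of the pipage rounding (α = 1 - x_i): feasibility of the rounding is
equivalent to system (I3). -/
theorem stmt_7 (a_ij a_i' a_j' q_ij q_i' q_j' x_i x_j : ℝ)
    (haij : a_ij ≤ 0) (hqij : 0 ≤ q_ij) (hqi : 0 ≤ q_i') (hqj : 0 ≤ q_j')
    (hxi0 : 0 < x_i) (hxi1 : x_i < 1) (hxj0 : 0 < x_j) (hxj1 : x_j < 1)
    (hphii : 0 < a_ij * x_j + a_i') (hq2 : 0 < q_ij + q_j') :
    (∃ β : ℝ, β ∈ Set.Icc (-x_j) (1 - x_j) ∧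
      a_ij * 1 * (x_j + β) + a_i' * 1 + a_j' * (x_j + β) ≥
        a_ij * x_i * x_j + a_i' * x_i + a_j' * x_j ∧
      q_ij * 1 * (x_j + β) + q_i' * 1 + q_j' * (x_j + β) ≤
        q_ij * x_i * x_j + q_i' * x_i + q_j' * x_j) ↔
    (q_ij * x_i * x_j + q_i' * x_i + q_j' * x_j ≥ q_i' ∧
      (a_ij * x_j + a_i') * (q_j' + q_ij) ≥ (q_ij * x_j + q_i') * (a_j' + a_ij)) := by
  constructor
  · rintro ⟨β, ⟨hβ1, hβ2⟩, h1, h2⟩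
    have ht0 : 0 ≤ x_j + β := by linarith
    have ht1 : x_j + β ≤ 1 := by linarith
    constructor
    · nlinarith [mul_nonneg (add_nonneg hqij hqj) ht0]
    · rcases le_or_gt 0 (a_ij + a_j') with hA | hA
      · -- A ≥ 0 : compare t with T
        nlinarith [mul_le_mul_of_nonneg_left h2 hA,
          mul_le_mul_of_nonneg_left h1 (le_of_lt hq2),
          mul_pos hq2 (sub_pos.mpr hxi1)]
      · nlinarith [mul_nonneg hqij hxj0.le, mul_nonneg (mul_nonneg hqij hxj0.le) (neg_nonneg.mpr hA.le), mul_nonneg hqi (neg_nonneg.mpr hA.le)]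
  · rintro ⟨h1, h2⟩
    rcases le_or_gt 0 (a_ij + a_j') with hA | hA
    · -- use t = T = (ψ0 - q_i')/Q
      set Q := q_ij + q_j' with hQ
      refine ⟨(q_ij * x_i * x_j + q_i' * x_i + q_j' * x_j - q_i') / Q - x_j, ⟨?_, ?_⟩, ?_, ?_⟩
      all_goals
        have hQt : Q * ((q_ij * x_i * x_j + q_i' * x_i + q_j' * x_j - q_i') / Q) =
            q_ij * x_i * x_j + q_i' * x_i + q_j' * x_j - q_i' := by
          field_simp
      · have : 0 ≤ (q_ij * x_i * x_j + q_i' * x_i + q_j' * x_j - q_i') / Q :=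
          div_nonneg (by linarith) hq2.le
        linarith
      · -- T ≤ x_j ≤ 1 so β ≤ 1 - x_j
        have hT : (q_ij * x_i * x_j + q_i' * x_i + q_j' * x_j - q_i') / Q ≤ x_j := by
          rw [div_le_iff₀ hq2]
          nlinarith [mul_nonneg hqij hxj0.le]
        linarith
      · have key : Q * (a_ij * 1 * (x_j + ((q_ij * x_i * x_j + q_i' * x_i + q_j' * x_j - q_i') / Q - x_j)) + a_i' * 1 + a_j' * (x_j + ((q_ij * x_i * x_j + q_i' * x_i + q_j' * x_j - q_i') / Q - x_j))
            - (a_ij * x_i * x_j + a_i' * x_i + a_j' * x_j)) =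
            (1 - x_i) * ((a_ij * x_j + a_i') * (q_j' + q_ij) - (q_ij * x_j + q_i') * (a_j' + a_ij)) := by
          have : (a_ij + a_j') * (Q * ((q_ij * x_i * x_j + q_i' * x_i + q_j' * x_j - q_i') / Q)) = (a_ij + a_j') * (q_ij * x_i * x_j + q_i' * x_i + q_j' * x_j - q_i') := by rw [hQt]
          ring_nf
          ring_nf at this
          linarith [this]
        have hpos : 0 ≤ (1 - x_i) * ((a_ij * x_j + a_i') * (q_j' + q_ij) - (q_ij * x_j + q_i') * (a_j' + a_ij)) :=
          mul_nonneg (by linarith) (by linarith)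
        nlinarith [key, hpos, hq2]
      · -- ψ equality at T
        have : q_ij * 1 * (x_j + ((q_ij * x_i * x_j + q_i' * x_i + q_j' * x_j - q_i') / Q - x_j)) + q_i' * 1 + q_j' * (x_j + ((q_ij * x_i * x_j + q_i' * x_i + q_j' * x_j - q_i') / Q - x_j))
            = q_ij * x_i * x_j + q_i' * x_i + q_j' * x_j := by
          have h := hQt
          ring_nf
          ring_nf at h
          linarith
        linarith [this.le]
    · -- A < 0 : use t = 0, i.e. β = -x_j
      refine ⟨-x_j, ⟨le_refl _, by linarith⟩, ?_, ?_⟩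
      · have hT0 : 0 ≤ q_ij * x_i * x_j + q_i' * x_i + q_j' * x_j - q_i' := by linarith
        have key : (q_ij + q_j') *
            (a_i' - (a_ij * x_i * x_j + a_i' * x_i + a_j' * x_j)) ≥ 0 := by
          nlinarith [mul_nonneg hT0 (neg_nonneg.mpr hA.le),
            mul_nonneg (by linarith : (0:ℝ) ≤ 1 - x_i) (sub_nonneg.mpr h2)]
        have : a_i' - (a_ij * x_i * x_j + a_i' * x_i + a_j' * x_j) ≥ 0 := by
          nlinarith [key]
        simp only [add_neg_cancel, mul_zero, mul_one]
        linarith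
      · simp only [add_neg_cancel, mul_zero, mul_one]
        linarith
end

section
/- Assume additionally φ'_j > 0 and q_ij + q_i' > 0. Then there exists α ∈ [−x_i, 1−x_i] such that φ(x_i+α, 1) ≥ φ(x_i, x_j) and ψ(x_i+α, 1) ≤ ψ(x_i, x_j) if and only if both ψ(x_i,x_j) ≥ q_j' and φ'_j·(q_i' + q_ij) ≥ ψ'_j·(a_i' + a_ij) hold. -/
/-!
Both gaps are affine in `α`: with `A = a_ij + a_i'`, `Q = q_ij + q_i'` and `u = 1 - x_j`,
`φ(x_i + α, 1) - φ(x_i, x_j) = A α + u φ'_j` and `ψ(x_i + α, 1) - ψ(x_i, x_j) = Q α + u ψ'_j`.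
As `Q > 0`, the `ψ`-constraint reads `α ≤ α* := -u ψ'_j / Q`, and `α* ≤ 0` because `ψ'_j ≥ 0`.
The point `α*` is always the best choice: for `A ≥ 0` it maximises the `φ`-gap on the feasible
range, and for `A < 0` the `φ`-gap at `α* ≤ 0` is already positive. So a feasible `α` exists iff
`α* ≥ -x_i` (the first condition) and the `φ`-gap at `α*`, which is `u (φ'_j Q - ψ'_j A) / Q`,
is nonnegative (the second one).
-/

open Set

lemma bilinear_shift_one_sub (a b c s t α : ℝ) :
    a * (s + α) * 1 + b * (s + α) + c * 1 - (a * s * t + b * s + c * t) =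
      (a + b) * α + (1 - t) * (a * s + c) := by
  ring

lemma exists_mem_Icc_affine_constraints_iff {A Q P R u lo hi : ℝ} (hQ : 0 < Q) (hu : 0 < u)
    (hP : 0 < P) (hR : 0 ≤ R) (hhi : 0 ≤ hi) :
    (∃ α ∈ Icc lo hi, 0 ≤ A * α + u * P ∧ Q * α + u * R ≤ 0) ↔
      Q * lo + u * R ≤ 0 ∧ R * A ≤ P * Q := by
  constructor
  · rintro ⟨α, ⟨hlo, -⟩, hφ, hψ⟩
    refine ⟨by linarith [mul_le_mul_of_nonneg_left hlo hQ.le], ?_⟩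
    rcases le_or_gt 0 A with hA | hA
    · have : 0 ≤ u * (P * Q - R * A) := by
        linarith [mul_nonneg hQ.le hφ, mul_nonpos_of_nonneg_of_nonpos hA hψ]
      linarith [(mul_nonneg_iff_of_pos_left hu).mp this]
    · linarith [mul_nonpos_of_nonneg_of_nonpos hR hA.le, mul_pos hP hQ]
  · rintro ⟨hlo, hRA⟩
    have hαQ : Q * (-(u * R) / Q) = -(u * R) := mul_div_cancel₀ _ hQ.ne'
    refine ⟨-(u * R) / Q, ⟨?_, ?_⟩, ?_, by linarith⟩
    · rw [le_div_iff₀ hQ]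
      linarith
    · exact (div_nonpos_of_nonpos_of_nonneg (neg_nonpos.mpr (mul_nonneg hu.le hR)) hQ.le).trans
        hhi
    · rw [show A * (-(u * R) / Q) + u * P = u * (P * Q - R * A) / Q by field_simp; ring]
      exact div_nonneg (mul_nonneg hu.le (sub_nonneg.mpr hRA)) hQ.le

theorem stmt_8_general (a_ij a_i' a_j' q_ij q_i' q_j' x_i x_j : ℝ)
    (hqij : 0 ≤ q_ij) (hqj : 0 ≤ q_j')
    (hxi0 : 0 < x_i) (hxi1 : x_i < 1) (hxj1 : x_j < 1)
    (hphij : 0 < a_ij * x_i + a_j') (hq1 : 0 < q_ij + q_i') :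
    (∃ α : ℝ, α ∈ Set.Icc (-x_i) (1 - x_i) ∧
      a_ij * (x_i + α) * 1 + a_i' * (x_i + α) + a_j' * 1 ≥
        a_ij * x_i * x_j + a_i' * x_i + a_j' * x_j ∧
      q_ij * (x_i + α) * 1 + q_i' * (x_i + α) + q_j' * 1 ≤
        q_ij * x_i * x_j + q_i' * x_i + q_j' * x_j) ↔
    (q_ij * x_i * x_j + q_i' * x_i + q_j' * x_j ≥ q_j' ∧
      (a_ij * x_i + a_j') * (q_i' + q_ij) ≥ (q_ij * x_i + q_j') * (a_i' + a_ij)) := by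
  calc _ ↔ ∃ α ∈ Icc (-x_i) (1 - x_i),
          0 ≤ (a_ij + a_i') * α + (1 - x_j) * (a_ij * x_i + a_j') ∧
            (q_ij + q_i') * α + (1 - x_j) * (q_ij * x_i + q_j') ≤ 0 := by
        refine exists_congr fun α => and_congr_right fun _ => and_congr ?_ ?_
        · rw [ge_iff_le, ← sub_nonneg, bilinear_shift_one_sub]
        · rw [← sub_nonpos, bilinear_shift_one_sub]
    _ ↔ _ := by
        rw [exists_mem_Icc_affine_constraints_iff hq1 (by linarith) hphij (by positivity)
          (by linarith)]
        constructor <;> rintro ⟨h1, h2⟩ <;> constructor <;> linarith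

/-- Case 4 of the pipage rounding (β = 1 - x_j): feasibility of the rounding is
equivalent to system (I4). -/
theorem stmt_8 (a_ij a_i' a_j' q_ij q_i' q_j' x_i x_j : ℝ)
    (haij : a_ij ≤ 0) (hqij : 0 ≤ q_ij) (hqi : 0 ≤ q_i') (hqj : 0 ≤ q_j')
    (hxi0 : 0 < x_i) (hxi1 : x_i < 1) (hxj0 : 0 < x_j) (hxj1 : x_j < 1)
    (hphij : 0 < a_ij * x_i + a_j') (hq1 : 0 < q_ij + q_i') :
    (∃ α : ℝ, α ∈ Set.Icc (-x_i) (1 - x_i) ∧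
      a_ij * (x_i + α) * 1 + a_i' * (x_i + α) + a_j' * 1 ≥
        a_ij * x_i * x_j + a_i' * x_i + a_j' * x_j ∧
      q_ij * (x_i + α) * 1 + q_i' * (x_i + α) + q_j' * 1 ≤
        q_ij * x_i * x_j + q_i' * x_i + q_j' * x_j) ↔
    (q_ij * x_i * x_j + q_i' * x_i + q_j' * x_j ≥ q_j' ∧
      (a_ij * x_i + a_j') * (q_i' + q_ij) ≥ (q_ij * x_i + q_j') * (a_i' + a_ij)) :=
  stmt_8_general a_ij a_i' a_j' q_ij q_i' q_j' x_i x_j hqij hqj hxi0 hxi1 hxj1 hphij hq1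
end

section
/- (Claim L1.) Assume additionally a_i' ≥ 0 and a_j' ≥ 0 (here only 0 ≤ x_i and 0 ≤ x_j are needed). Then at least one of the two inequalities holds: φ'_i·q_j' ≤ a_j'·ψ'_i or φ'_j·q_i' ≤ a_i'·ψ'_j. -/
/-- Claim L1: at least one of (I1.2), (I2.2) holds. -/
theorem stmt_9 (a_ij a_i' a_j' q_ij q_i' q_j' x_i x_j : ℝ)
    (haij : a_ij ≤ 0) (hqij : 0 ≤ q_ij) (hqi : 0 ≤ q_i') (hqj : 0 ≤ q_j')
    (hxi0 : 0 ≤ x_i) (hxj0 : 0 ≤ x_j)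
    (hai : 0 ≤ a_i') (haj : 0 ≤ a_j') :
    (a_ij * x_j + a_i') * q_j' ≤ a_j' * (q_ij * x_j + q_i') ∨
      (a_ij * x_i + a_j') * q_i' ≤ a_i' * (q_ij * x_i + q_j') := by
  rcases le_total (a_i' * q_j') (a_j' * q_i') with h | h
  · left
    nlinarith [mul_nonneg (mul_nonneg haj hqij) hxj0, mul_nonneg (mul_nonneg (neg_nonneg.2 haij) hxj0) hqj]
  · right
    nlinarith [mul_nonneg (mul_nonneg hai hqij) hxi0, mul_nonneg (mul_nonneg (neg_nonneg.2 haij) hxi0) hqi]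
end

section
/- (Claim L2.) Assume additionally a_i' ≥ 0 and a_j' ≥ 0. Then at least one of the two inequalities holds: φ'_i·(q_j' + q_ij) ≥ ψ'_i·(a_j' + a_ij) or φ'_j·(q_i' + q_ij) ≥ ψ'_j·(a_i' + a_ij). -/
/-- Claim L2: at least one of (I3.2), (I4.2) holds. -/
theorem stmt_10 (a_ij a_i' a_j' q_ij q_i' q_j' x_i x_j : ℝ)
    (haij : a_ij ≤ 0) (hqij : 0 ≤ q_ij) (hqi : 0 ≤ q_i') (hqj : 0 ≤ q_j')
    (hxi0 : 0 < x_i) (hxi1 : x_i < 1) (hxj0 : 0 < x_j) (hxj1 : x_j < 1)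
    (hai : 0 ≤ a_i') (haj : 0 ≤ a_j') :
    (a_ij * x_j + a_i') * (q_j' + q_ij) ≥ (q_ij * x_j + q_i') * (a_j' + a_ij) ∨
      (a_ij * x_i + a_j') * (q_i' + q_ij) ≥ (q_ij * x_i + q_j') * (a_i' + a_ij) := by
  by_contra h
  push_neg at h
  obtain ⟨h1, h2⟩ := h
  nlinarith [mul_nonneg (mul_nonneg (neg_nonneg.2 haij) hqj) (sub_nonneg.2 hxj1.le),
    mul_nonneg (mul_nonneg (neg_nonneg.2 haij) hqi) (sub_nonneg.2 hxi1.le),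
    mul_nonneg (mul_nonneg hai hqij) (sub_nonneg.2 hxi1.le),
    mul_nonneg (mul_nonneg haj hqij) (sub_nonneg.2 hxj1.le)]
end

section
/- (Claim L4.) Assume additionally a_i' > 0. If φ'_j·q_i' ≤ a_i'·ψ'_j and ψ(x_i,x_j) < q_i', then φ(x_i,x_j) < a_i'. -/
/-- Claim L4: (I2.2) together with ¬(I3.1) implies (I2.1). -/
theorem stmt_12 (a_ij a_i' a_j' q_ij q_i' q_j' x_i x_j : ℝ)
    (haij : a_ij ≤ 0) (hqij : 0 ≤ q_ij) (hqi : 0 ≤ q_i') (hqj : 0 ≤ q_j')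
    (hxi0 : 0 < x_i) (hxi1 : x_i < 1) (hxj0 : 0 < x_j) (hxj1 : x_j < 1)
    (hai : 0 < a_i')
    (h1 : (a_ij * x_i + a_j') * q_i' ≤ a_i' * (q_ij * x_i + q_j'))
    (h2 : q_ij * x_i * x_j + q_i' * x_i + q_j' * x_j < q_i') :
    a_ij * x_i * x_j + a_i' * x_i + a_j' * x_j < a_i' := by
  have hq : 0 < q_i' := by nlinarith [mul_pos hxi0 hxj0, mul_pos hxj0 hxj0]
  rcases le_or_gt (a_ij * x_i + a_j') 0 with h | h
  · nlinarith [mul_nonpos_of_nonneg_of_nonpos hxj0.le h]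
  · have key : x_j * ((a_ij * x_i + a_j') * q_i') ≤ x_j * (a_i' * (q_ij * x_i + q_j')) :=
      mul_le_mul_of_nonneg_left h1 hxj0.le
    nlinarith [mul_pos hai hq, mul_pos hxj0 h]
end

section
/- Assume additionally a_i' > 0, a_j' > 0, φ(x_i,x_j) > 0, φ'_i > 0, φ'_j > 0, q_ij + q_i' > 0 and q_ij + q_j' > 0. Then at least one of the four conditions (I1), (I2), (I3), (I4) holds. -/
set_option maxHeartbeats 1000000 in
/-- Under the standing positivity assumptions, at least one of the four systems
(I1), (I2), (I3), (I4) is feasible. -/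
theorem stmt_14 (a_ij a_i' a_j' q_ij q_i' q_j' x_i x_j : ℝ)
    (haij : a_ij ≤ 0) (hqij : 0 ≤ q_ij) (hqi : 0 ≤ q_i') (hqj : 0 ≤ q_j')
    (hxi0 : 0 < x_i) (hxi1 : x_i < 1) (hxj0 : 0 < x_j) (hxj1 : x_j < 1)
    (hai : 0 < a_i') (haj : 0 < a_j')
    (hphi : 0 < a_ij * x_i * x_j + a_i' * x_i + a_j' * x_j)
    (hphii : 0 < a_ij * x_j + a_i') (hphij : 0 < a_ij * x_i + a_j')
    (hq1 : 0 < q_ij + q_i') (hq2 : 0 < q_ij + q_j') :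
    (a_ij * x_i * x_j + a_i' * x_i + a_j' * x_j ≤ a_j' ∧
      (a_ij * x_j + a_i') * q_j' ≤ a_j' * (q_ij * x_j + q_i')) ∨
    (a_ij * x_i * x_j + a_i' * x_i + a_j' * x_j ≤ a_i' ∧
      (a_ij * x_i + a_j') * q_i' ≤ a_i' * (q_ij * x_i + q_j')) ∨
    (q_ij * x_i * x_j + q_i' * x_i + q_j' * x_j ≥ q_i' ∧
      (a_ij * x_j + a_i') * (q_j' + q_ij) ≥ (q_ij * x_j + q_i') * (a_j' + a_ij)) ∨
    (q_ij * x_i * x_j + q_i' * x_i + q_j' * x_j ≥ q_j' ∧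
      (a_ij * x_i + a_j') * (q_i' + q_ij) ≥ (q_ij * x_i + q_j') * (a_i' + a_ij)) := by
  have hpsii : (0:ℝ) ≤ q_ij * x_j + q_i' := by nlinarith [mul_nonneg hqij hxj0.le]
  have hpsij : (0:ℝ) ≤ q_ij * x_i + q_j' := by nlinarith [mul_nonneg hqij hxi0.le]
  by_cases h3b : (a_ij * x_j + a_i') * (q_j' + q_ij) ≥ (q_ij * x_j + q_i') * (a_j' + a_ij)
  · by_cases h4b : (a_ij * x_i + a_j') * (q_i' + q_ij) ≥ (q_ij * x_i + q_j') * (a_i' + a_ij)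
    · by_cases hC : q_ij * x_i * x_j + q_i' * x_i + q_j' * x_j ≥ q_i'
      · exact Or.inr (Or.inr (Or.inl ⟨hC, h3b⟩))
      by_cases hD : q_ij * x_i * x_j + q_i' * x_i + q_j' * x_j ≥ q_j'
      · exact Or.inr (Or.inr (Or.inr ⟨hD, h4b⟩))
      push_neg at hC hD
      by_cases h1b : (a_ij * x_j + a_i') * q_j' ≤ a_j' * (q_ij * x_j + q_i')
      · -- show φ ≤ a_j'
        refine Or.inl ⟨?_, h1b⟩
        by_contra hA
        push_neg at hA
        -- φ'_i x_i > a_j'(1-x_j), a_j'ψ'_i ≥ φ'_i q_j' ⇒ x_i ψ'_i > (1-x_j) q_j' ⇒ ψ > q_j'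
        nlinarith [mul_nonneg hpsii (by nlinarith : (0:ℝ) ≤ (a_ij * x_j + a_i') * x_i - a_j' * (1 - x_j)),
          mul_nonneg (mul_nonneg hqj (by linarith : (0:ℝ) ≤ 1 - x_j)) hphii.le,
          mul_pos hphii hxi0, mul_nonneg hqj hxj0.le]
      · -- ¬I1b ⇒ I2b
        push_neg at h1b
        have hqj' : 0 < q_j' := by nlinarith [mul_nonneg haj.le hpsii, mul_nonneg haj.le hqi]
        have h2b : (a_ij * x_i + a_j') * q_i' ≤ a_i' * (q_ij * x_i + q_j') := by
          by_contra h2b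
          push_neg at h2b
          have hqi' : 0 < q_i' := by nlinarith [mul_nonneg hai.le hpsij, mul_nonneg hai.le hqj]
          -- product contradiction
          nlinarith [mul_lt_mul'' h1b h2b (by positivity) (by positivity),
            mul_nonneg (mul_nonneg hqij hxj0.le) (mul_nonneg (mul_nonneg hai.le haj.le) hqj),
            mul_nonneg (mul_nonneg hqij hxi0.le) (mul_nonneg (mul_nonneg hai.le haj.le) hqi),
            mul_nonneg (mul_nonneg hqij hxj0.le) (mul_nonneg (mul_nonneg hai.le haj.le) (mul_nonneg hqij hxi0.le)),
            mul_nonneg (mul_nonneg (neg_nonneg.2 haij) hxj0.le) (mul_nonneg hphij.le hqi),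
            mul_nonneg (mul_nonneg (neg_nonneg.2 haij) hxi0.le) (mul_nonneg hai.le hqj'.le),
            mul_nonneg (mul_nonneg (neg_nonneg.2 haij) hxi0.le) (mul_nonneg (mul_nonneg (neg_nonneg.2 haij) hxj0.le) (mul_nonneg hqi hqj'.le))]
        refine Or.inr (Or.inl ⟨?_, h2b⟩)
        by_contra hB
        push_neg at hB
        nlinarith [mul_nonneg hpsij (by nlinarith : (0:ℝ) ≤ (a_ij * x_i + a_j') * x_j - a_i' * (1 - x_i)),
          mul_nonneg (mul_nonneg hqi (by linarith : (0:ℝ) ≤ 1 - x_i)) hphij.le,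
          mul_pos hphij hxj0, mul_nonneg hqi hxi0.le]
    · -- ¬I4b ⇒ I2b and I3b holds
      push_neg at h4b
      have h2b : (a_ij * x_i + a_j') * q_i' ≤ a_i' * (q_ij * x_i + q_j') := by
        nlinarith [mul_nonneg hpsij (neg_nonneg.2 haij), mul_nonneg hphij.le hqij]
      by_cases hB : a_ij * x_i * x_j + a_i' * x_i + a_j' * x_j ≤ a_i'
      · exact Or.inr (Or.inl ⟨hB, h2b⟩)
      · push_neg at hB
        refine Or.inr (Or.inr (Or.inl ⟨?_, h3b⟩))
        -- I2b ∧ φ > a_i' ⇒ ψ ≥ q_i'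
        nlinarith [mul_nonneg hpsij (by nlinarith : (0:ℝ) ≤ (a_ij * x_i + a_j') * x_j - a_i' * (1 - x_i)),
          mul_nonneg (mul_nonneg hqi (by linarith : (0:ℝ) ≤ 1 - x_i)) hphij.le,
          mul_pos hphij hxj0, mul_nonneg hqi hxi0.le]
  · -- ¬I3b ⇒ I1b, and I4b must hold
    push_neg at h3b
    have h1b : (a_ij * x_j + a_i') * q_j' ≤ a_j' * (q_ij * x_j + q_i') := by
      nlinarith [mul_nonneg hpsii (neg_nonneg.2 haij), mul_nonneg hphii.le hqij]
    have haji : 0 < a_j' + a_ij := by nlinarith [mul_pos hphii hq2, mul_nonneg hpsii haj.le]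
    have hpsii' : 0 < q_ij * x_j + q_i' := by nlinarith [mul_pos hphii hq2]
    have h4b : (a_ij * x_i + a_j') * (q_i' + q_ij) ≥ (q_ij * x_i + q_j') * (a_i' + a_ij) := by
      by_contra h4b
      push_neg at h4b
      have haij' : 0 < a_i' + a_ij := by nlinarith [mul_pos hphij hq1, mul_nonneg hpsij hai.le]
      have hpsij' : 0 < q_ij * x_i + q_j' := by nlinarith [mul_pos hphij hq1]
      have key := mul_lt_mul'' h3b h4b (by positivity) (by positivity)
      -- ψ'_i(a_j'+a_ij) ≤ (q_ij+q_i')φ'_j  and  ψ'_j(a_i'+a_ij) ≤ (q_ij+q_j')φ'_i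
      have s1 : (q_ij * x_j + q_i') * (a_j' + a_ij) ≤ (q_ij + q_i') * (a_ij * x_i + a_j') := by
        nlinarith [mul_nonneg (mul_nonneg hqij (by linarith : (0:ℝ) ≤ 1 - x_j)) haji.le,
          mul_nonneg (mul_nonneg (neg_nonneg.2 haij) (by linarith : (0:ℝ) ≤ 1 - x_i)) hq1.le]
      have s2 : (q_ij * x_i + q_j') * (a_i' + a_ij) ≤ (q_ij + q_j') * (a_ij * x_j + a_i') := by
        nlinarith [mul_nonneg (mul_nonneg hqij (by linarith : (0:ℝ) ≤ 1 - x_i)) haij'.le,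
          mul_nonneg (mul_nonneg (neg_nonneg.2 haij) (by linarith : (0:ℝ) ≤ 1 - x_j)) hq2.le]
      nlinarith [mul_le_mul s1 s2 (by positivity) (by positivity)]
    by_cases hA : a_ij * x_i * x_j + a_i' * x_i + a_j' * x_j ≤ a_j'
    · exact Or.inl ⟨hA, h1b⟩
    · push_neg at hA
      refine Or.inr (Or.inr (Or.inr ⟨?_, h4b⟩))
      nlinarith [mul_nonneg hpsii (by nlinarith : (0:ℝ) ≤ (a_ij * x_j + a_i') * x_i - a_j' * (1 - x_j)),
        mul_nonneg (mul_nonneg hqj (by linarith : (0:ℝ) ≤ 1 - x_j)) hphii.le,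
        mul_pos hphii hxi0, mul_nonneg hqj hxj0.le]
end
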